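/- Let Q̃_φ, Q̃_opt be symmetric positive definite s×s matrices with eigenvalues in [r, L], and let b be a random vector with E[b bᵀ] = σ_b²·I independent of everything else. Suppose a random nonnegative quantity ℓ satisfies ‖Q̃_φ^{−1} b − Q̃_opt^{−1} b‖ ≤ ℓ + C almost surely for a constant C ≥ 0. Then ‖Q̃_φ − Q̃_opt‖_F² ≤ σ_b^{−2}·L⁴·(√(E[ℓ²]) + C)². -/

import Mathlib

/-!
Since `Q̃_φ - Q̃_opt = Q̃_φ (Q̃_opt⁻¹ - Q̃_φ⁻¹) Q̃_opt` and a positive semidefinite `Q ≤ L` satisfies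
`Qᵀ Q = Q² ≤ L²`, the squared Frobenius norm of `Q̃_φ - Q̃_opt` is at most `L⁴` times that of
`N = Q̃_φ⁻¹ - Q̃_opt⁻¹`. The latter is `σ_b⁻² E‖N b‖²` because `b` is isotropic, and squaring the
almost sure bound gives `E‖N b‖² ≤ E(ℓ + C)² ≤ (√(E ℓ²) + C)²`, the last step by `(E ℓ)² ≤ E ℓ²`.
-/

open Matrix MeasureTheory

lemma sq_le_algebraMap_sq_of_nonneg_of_le {A : Type*} [TopologicalSpace A] [Ring A] [StarRing A]
    [PartialOrder A] [StarOrderedRing A] [Algebra ℝ A]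
    [ContinuousFunctionalCalculus ℝ A IsSelfAdjoint] [NonnegSpectrumClass ℝ A]
    {a : A} {r : ℝ} (ha : 0 ≤ a) (har : a ≤ algebraMap ℝ A r) :
    a ^ 2 ≤ algebraMap ℝ A (r ^ 2) := by
  have hspec_nonneg := (StarOrderedRing.nonneg_iff_spectrum_nonneg (R := ℝ) a).mp ha
  have hspec_le := (le_algebraMap_iff_spectrum_le (R := ℝ)).mp har
  rw [← cfc_pow_id (R := ℝ) a 2]
  exact cfc_le_algebraMap _ _ a fun x hx => pow_le_pow_left₀ (hspec_nonneg x hx) (hspec_le x hx) 2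

namespace Matrix

open scoped MatrixOrder

variable {m n : Type*} [Fintype m] [Fintype n]

lemma trace_transpose_mul_self (A : Matrix m n ℝ) : (Aᵀ * A).trace = ∑ i, ∑ j, A i j ^ 2 := by
  rw [trace_mul_comm]
  simp [trace, mul_apply, sq]

lemma sum_sq_transpose (A : Matrix m n ℝ) : ∑ i, ∑ j, Aᵀ i j ^ 2 = ∑ i, ∑ j, A i j ^ 2 :=
  Finset.sum_comm

lemma sum_sq_mulVec (N : Matrix m n ℝ) (v : n → ℝ) :
    ∑ i, (N *ᵥ v) i ^ 2 = ∑ i, ∑ j, ∑ k, N i j * N i k * (v j * v k) := by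
  refine Finset.sum_congr rfl fun i _ => ?_
  rw [mulVec, dotProduct, sq, Finset.sum_mul_sum]
  exact Finset.sum_congr rfl fun j _ => Finset.sum_congr rfl fun k _ => by ring

variable [DecidableEq n]

lemma sum_sq_mul_le_of_transpose_mul_self_le {Q : Matrix n n ℝ} {c : ℝ}
    (hQ : Qᵀ * Q ≤ c • 1) (X : Matrix n m ℝ) :
    ∑ i, ∑ j, (Q * X) i j ^ 2 ≤ c * ∑ i, ∑ j, X i j ^ 2 := by
  have hgap := (le_iff.mp hQ).conjTranspose_mul_mul_same X
  rw [conjTranspose_eq_transpose_of_trivial] at hgap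
  have htrace := hgap.trace_nonneg
  rw [← trace_transpose_mul_self, ← trace_transpose_mul_self, ← smul_eq_mul, ← trace_smul]
  simp only [Matrix.mul_sub, Matrix.sub_mul, Matrix.mul_smul, Matrix.smul_mul, Matrix.mul_one,
    trace_sub] at htrace
  rwa [transpose_mul, Matrix.mul_assoc, ← Matrix.mul_assoc Qᵀ, ← Matrix.mul_assoc, ← sub_nonneg]

lemma sum_sq_mul_le_of_mul_transpose_self_le {Q : Matrix n n ℝ} {c : ℝ}
    (hQ : Q * Qᵀ ≤ c • 1) (X : Matrix m n ℝ) :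
    ∑ i, ∑ j, (X * Q) i j ^ 2 ≤ c * ∑ i, ∑ j, X i j ^ 2 := by
  rw [← sum_sq_transpose, transpose_mul, ← sum_sq_transpose X]
  exact sum_sq_mul_le_of_transpose_mul_self_le (by rwa [transpose_transpose]) Xᵀ

lemma PosSemidef.transpose_mul_self_le {Q : Matrix n n ℝ} {L : ℝ} (hQ : Q.PosSemidef)
    (hQL : Q ≤ L • 1) : Qᵀ * Q ≤ L ^ 2 • 1 := by
  rw [(isHermitian_iff_isSymm.mp hQ.isHermitian).eq, ← sq, ← Algebra.algebraMap_eq_smul_one]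
  exact sq_le_algebraMap_sq_of_nonneg_of_le hQ.nonneg (by rwa [Algebra.algebraMap_eq_smul_one])

lemma sum_sq_sub_le_pow_four_mul_sum_sq_inv_sub {A B : Matrix n n ℝ} {L : ℝ}
    (hA : A.PosDef) (hB : B.PosDef) (hAL : A ≤ L • 1) (hBL : B ≤ L • 1) :
    ∑ i, ∑ j, (A - B) i j ^ 2 ≤ L ^ 4 * ∑ i, ∑ j, (A⁻¹ - B⁻¹) i j ^ 2 := by
  have hfactor : A - B = A * (B⁻¹ - A⁻¹) * B := by
    rw [Matrix.mul_sub, Matrix.sub_mul, Matrix.mul_assoc,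
      nonsing_inv_mul _ ((isUnit_iff_isUnit_det B).mp hB.isUnit),
      mul_nonsing_inv _ ((isUnit_iff_isUnit_det A).mp hA.isUnit), Matrix.mul_one, Matrix.one_mul]
  calc ∑ i, ∑ j, (A - B) i j ^ 2 = ∑ i, ∑ j, (A * (B⁻¹ - A⁻¹) * B) i j ^ 2 := by rw [hfactor]
    _ ≤ L ^ 2 * ∑ i, ∑ j, (A * (B⁻¹ - A⁻¹)) i j ^ 2 :=
      sum_sq_mul_le_of_mul_transpose_self_le
        (by simpa [(isHermitian_iff_isSymm.mp hB.isHermitian).eq] using hB.posSemidef.transpose_mul_self_le hBL) _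
    _ ≤ L ^ 2 * (L ^ 2 * ∑ i, ∑ j, (B⁻¹ - A⁻¹) i j ^ 2) := by
      gcongr
      exact sum_sq_mul_le_of_transpose_mul_self_le (hA.posSemidef.transpose_mul_self_le hAL) _
    _ = L ^ 4 * ∑ i, ∑ j, (A⁻¹ - B⁻¹) i j ^ 2 := by
      rw [← neg_sub A⁻¹]
      simp only [neg_apply, neg_sq]
      ring

end Matrix

section SecondMoment

variable {Ω : Type*} [MeasurableSpace Ω] {μ : Measure Ω} {m n : Type*} [Fintype m] [Fintype n]
  {b : Ω → n → ℝ}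

lemma integrable_sum_sq_mulVec (hb : ∀ j k, Integrable (fun ω => b ω j * b ω k) μ)
    (N : Matrix m n ℝ) : Integrable (fun ω => ∑ i, (N *ᵥ b ω) i ^ 2) μ := by
  simp_rw [sum_sq_mulVec]
  exact integrable_finsetSum _ fun i _ => integrable_finsetSum _ fun j _ =>
    integrable_finsetSum _ fun k _ => (hb j k).const_mul _

lemma integral_sum_sq_mulVec [DecidableEq n] {c : ℝ}
    (hb : ∀ j k, Integrable (fun ω => b ω j * b ω k) μ)
    (hcov : ∀ j k, ∫ ω, b ω j * b ω k ∂μ = if j = k then c else 0) (N : Matrix m n ℝ) :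
    ∫ ω, ∑ i, (N *ᵥ b ω) i ^ 2 ∂μ = c * ∑ i, ∑ j, N i j ^ 2 := by
  have hterm : ∀ i j k, Integrable (fun ω => N i j * N i k * (b ω j * b ω k)) μ :=
    fun i j k => (hb j k).const_mul _
  simp_rw [sum_sq_mulVec]
  rw [integral_finsetSum _ fun i _ => integrable_finsetSum _ fun j _ =>
    integrable_finsetSum _ fun k _ => hterm i j k, Finset.mul_sum]
  refine Finset.sum_congr rfl fun i _ => ?_
  rw [integral_finsetSum _ fun j _ => integrable_finsetSum _ fun k _ => hterm i j k,
    Finset.mul_sum]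
  refine Finset.sum_congr rfl fun j _ => ?_
  rw [integral_finsetSum _ fun k _ => hterm i j k]
  simp only [integral_const_mul, hcov, mul_ite, mul_zero, Finset.sum_ite_eq, Finset.mem_univ,
    if_true]
  ring

end SecondMoment

section SquareIntegrable

variable {Ω : Type*} [MeasurableSpace Ω] {μ : Measure Ω} {X : Ω → ℝ}

lemma memLp_two_of_nonneg_of_integrable_sq (h0 : 0 ≤ᵐ[μ] X)
    (h : Integrable (fun ω => X ω ^ 2) μ) : MemLp X 2 μ := by
  have hX : X =ᵐ[μ] fun ω => √(X ω ^ 2) := by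
    filter_upwards [h0] with ω hω using (Real.sqrt_sq hω).symm
  refine (memLp_two_iff_integrable_sq ?_).mpr h
  exact (Real.continuous_sqrt.comp_aestronglyMeasurable h.aestronglyMeasurable).congr hX.symm

lemma integral_add_const_sq_le [IsProbabilityMeasure μ] (hX : MemLp X 2 μ) {C : ℝ}
    (hC : 0 ≤ C) : ∫ ω, (X ω + C) ^ 2 ∂μ ≤ (√(∫ ω, X ω ^ 2 ∂μ) + C) ^ 2 := by
  have hmean : ∫ ω, X ω ∂μ ≤ √(∫ ω, X ω ^ 2 ∂μ) := by
    refine (le_abs_self _).trans (Real.abs_le_sqrt ?_)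
    have hvar := ProbabilityTheory.variance_nonneg X μ
    rw [ProbabilityTheory.variance_eq_sub hX] at hvar
    simpa using hvar
  have hexpand : ∫ ω, (X ω + C) ^ 2 ∂μ = ∫ ω, X ω ^ 2 ∂μ + 2 * C * ∫ ω, X ω ∂μ + C ^ 2 := by
    have hcross : Integrable (fun ω => 2 * X ω * C) μ :=
      ((hX.integrable one_le_two).const_mul 2).mul_const C
    have hsum : Integrable (fun ω => X ω ^ 2 + 2 * X ω * C) μ := hX.integrable_sq.add hcross
    simp_rw [add_sq]
    rw [integral_add hsum (integrable_const _), integral_add hX.integrable_sq hcross]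
    simp only [integral_mul_const, integral_const_mul, integral_const, probReal_univ, smul_eq_mul,
      one_mul]
    ring
  have hsqrt := Real.sq_sqrt (integral_nonneg (μ := μ) fun ω => sq_nonneg (X ω))
  rw [hexpand]
  nlinarith

end SquareIntegrable

theorem frobenius_bound_from_loss_general {s : ℕ} {Ω : Type*} [MeasurableSpace Ω]
    (μ : Measure Ω) [IsProbabilityMeasure μ]
    (L σb C : ℝ) (hσb : 0 < σb) (hC : 0 ≤ C)
    (Qφ Qopt : Matrix (Fin s) (Fin s) ℝ) (hQφ : Qφ.PosDef) (hQopt : Qopt.PosDef)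
    (hQφu : ((L • (1 : Matrix (Fin s) (Fin s) ℝ)) - Qφ).PosSemidef)
    (hQou : ((L • (1 : Matrix (Fin s) (Fin s) ℝ)) - Qopt).PosSemidef)
    (b : Ω → Fin s → ℝ)
    (hbint : ∀ i j, Integrable (fun ω => b ω i * b ω j) μ)
    (hcov : ∀ i j, (∫ ω, b ω i * b ω j ∂μ) = if i = j then σb ^ 2 else 0)
    (ℓ : Ω → ℝ) (hℓ0 : ∀ ω, 0 ≤ ℓ ω)
    (hℓint : Integrable (fun ω => ℓ ω ^ 2) μ)
    (hbound : ∀ᵐ ω ∂μ,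
      Real.sqrt (∑ i, ((Qφ⁻¹.mulVec (b ω) - Qopt⁻¹.mulVec (b ω)) i) ^ 2) ≤ ℓ ω + C) :
    (∑ i, ∑ j, ((Qφ - Qopt) i j) ^ 2) ≤
      σb⁻¹ ^ 2 * L ^ 4 * (Real.sqrt (∫ ω, ℓ ω ^ 2 ∂μ) + C) ^ 2 := by
  simp_rw [← sub_mulVec] at hbound
  set N := Qφ⁻¹ - Qopt⁻¹
  have hℓ : MemLp ℓ 2 μ := memLp_two_of_nonneg_of_integrable_sq (.of_forall hℓ0) hℓint
  have hsq : ∀ᵐ ω ∂μ, ∑ i, (N *ᵥ b ω) i ^ 2 ≤ (ℓ ω + C) ^ 2 := by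
    filter_upwards [hbound] with ω hω using (Real.sqrt_le_iff.mp hω).2
  have hmoment : σb ^ 2 * ∑ i, ∑ j, N i j ^ 2 ≤ (√(∫ ω, ℓ ω ^ 2 ∂μ) + C) ^ 2 :=
    calc σb ^ 2 * ∑ i, ∑ j, N i j ^ 2 = ∫ ω, ∑ i, (N *ᵥ b ω) i ^ 2 ∂μ :=
          (integral_sum_sq_mulVec hbint hcov N).symm
      _ ≤ ∫ ω, (ℓ ω + C) ^ 2 ∂μ := integral_mono_ae (integrable_sum_sq_mulVec hbint N)
          (hℓ.add (memLp_const C)).integrable_sq hsq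
      _ ≤ _ := integral_add_const_sq_le hℓ hC
  have hN : ∑ i, ∑ j, N i j ^ 2 ≤ σb⁻¹ ^ 2 * (√(∫ ω, ℓ ω ^ 2 ∂μ) + C) ^ 2 := by
    rwa [inv_pow, ← div_eq_inv_mul, le_div_iff₀ (by positivity), mul_comm]
  calc ∑ i, ∑ j, (Qφ - Qopt) i j ^ 2 ≤ L ^ 4 * ∑ i, ∑ j, N i j ^ 2 :=
        sum_sq_sub_le_pow_four_mul_sum_sq_inv_sub hQφ hQopt (le_iff.mpr hQφu) (le_iff.mpr hQou)
    _ ≤ L ^ 4 * (σb⁻¹ ^ 2 * (√(∫ ω, ℓ ω ^ 2 ∂μ) + C) ^ 2) := by gcongr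
    _ = _ := by ring

theorem frobenius_bound_from_loss {s : ℕ} {Ω : Type*} [MeasurableSpace Ω]
    (μ : Measure Ω) [IsProbabilityMeasure μ]
    (r L σb C : ℝ) (hr : 0 < r) (hrL : r ≤ L) (hσb : 0 < σb) (hC : 0 ≤ C)
    (Qφ Qopt : Matrix (Fin s) (Fin s) ℝ) (hQφ : Qφ.PosDef) (hQopt : Qopt.PosDef)
    (hQφl : (Qφ - r • (1 : Matrix (Fin s) (Fin s) ℝ)).PosSemidef)
    (hQφu : ((L • (1 : Matrix (Fin s) (Fin s) ℝ)) - Qφ).PosSemidef)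
    (hQol : (Qopt - r • (1 : Matrix (Fin s) (Fin s) ℝ)).PosSemidef)
    (hQou : ((L • (1 : Matrix (Fin s) (Fin s) ℝ)) - Qopt).PosSemidef)
    (b : Ω → Fin s → ℝ)
    (hbint : ∀ i j, Integrable (fun ω => b ω i * b ω j) μ)
    (hcov : ∀ i j, (∫ ω, b ω i * b ω j ∂μ) = if i = j then σb ^ 2 else 0)
    (ℓ : Ω → ℝ) (hℓ0 : ∀ ω, 0 ≤ ℓ ω)
    (hℓint : Integrable (fun ω => ℓ ω ^ 2) μ)
    (hbound : ∀ᵐ ω ∂μ,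
      Real.sqrt (∑ i, ((Qφ⁻¹.mulVec (b ω) - Qopt⁻¹.mulVec (b ω)) i) ^ 2) ≤ ℓ ω + C) :
    (∑ i, ∑ j, ((Qφ - Qopt) i j) ^ 2) ≤
      σb⁻¹ ^ 2 * L ^ 4 * (Real.sqrt (∫ ω, ℓ ω ^ 2 ∂μ) + C) ^ 2 :=
  frobenius_bound_from_loss_general μ L σb C hσb hC Qφ Qopt hQφ hQopt hQφu hQou b hbint hcov ℓ hℓ0
    hℓint hbound
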